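/- The Poisson bracket on 1-forms equips the real vector space 𝒜ⁿ of reduced 1-forms with a Lie algebra structure: the bracket is ℝ-bilinear, antisymmetric ({α,β} = −{β,α}), and satisfies the Jacobi identity. -/
import Mathlib


open Finset

/-- An abstract model of the ring `𝒜` of differential polynomials in the formal
variables `u^i_{(s)}` (`i = 1,…,n`, `s ≥ 0`, `u^i_{(0)} = u^i`): a commutative
`ℝ`-algebra `A` equipped with the variables `u (i,s)`, the partial derivatives
`pd (i,s) = ∂/∂u^i_{(s)}` (commuting `ℝ`-linear derivations with
`∂u^j_{(t)}/∂u^i_{(s)} = δ`), a finiteness witness `supp f` (each `f` depends on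
finitely many of the variables), and the total `x`-derivative
`∂_x f = Σ_{i,s} u^i_{(s+1)} ∂f/∂u^i_{(s)}` (a finite sum on each `f`). -/
structure DiffPolyAlg (n : ℕ) (A : Type*) [CommRing A] [Algebra ℝ A] where
  u : Fin n × ℕ → A
  pd : Fin n × ℕ → A → A
  pd_add : ∀ v f g, pd v (f + g) = pd v f + pd v g
  pd_smul : ∀ v (r : ℝ) f, pd v (r • f) = r • pd v f
  pd_mul : ∀ v f g, pd v (f * g) = pd v f * g + f * pd v g
  pd_u : ∀ v w, pd v (u w) = if v = w then 1 else 0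
  pd_comm : ∀ v w f, pd v (pd w f) = pd w (pd v f)
  supp : A → Finset (Fin n × ℕ)
  pd_eq_zero : ∀ f v, v ∉ supp f → pd v f = 0
  Dx : A → A
  Dx_add : ∀ f g, Dx (f + g) = Dx f + Dx g
  Dx_smul : ∀ (r : ℝ) f, Dx (r • f) = r • Dx f
  Dx_mul : ∀ f g, Dx (f * g) = Dx f * g + f * Dx g
  Dx_spec : ∀ f, ∀ S : Finset (Fin n × ℕ), supp f ⊆ S →
      Dx f = ∑ v ∈ S, u (v.1, v.2 + 1) * pd v f

namespace DiffPolyAlg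

variable {n : ℕ} {A : Type*} [CommRing A] [Algebra ℝ A]

/-- The finite set of orders `s` such that `∂f/∂u^i_{(s)}` can be nonzero;
sums `Σ_s` below are taken over this set. -/
def sset (D : DiffPolyAlg n A) (f : A) (i : Fin n) : Finset ℕ :=
  ((D.supp f).filter fun v => v.1 = i).image Prod.snd

/-- The components `{α,β}_i = Σ_{k,l,s} η^{kl} [ (∂_x^{s+1}β_l)(∂α_i/∂u^k_{(s)})
− (∂_x^{s+1}α_l)(∂β_i/∂u^k_{(s)}) ]` of the Poisson bracket of two reduced
1-forms in flat coordinates (the sum over the pairs `(k,s)` is restricted to the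
finite set where the partial derivatives can be nonzero). -/
def pbracket (D : DiffPolyAlg n A) (η : Fin n → Fin n → ℝ)
    (α β : Fin n → A) : Fin n → A := fun i =>
  (∑ v ∈ D.supp (α i), ∑ l, η v.1 l • (D.Dx^[v.2 + 1] (β l) * D.pd v (α i)))
    - ∑ v ∈ D.supp (β i), ∑ l, η v.1 l • (D.Dx^[v.2 + 1] (α l) * D.pd v (β i))

end DiffPolyAlg

namespace DiffPolyAlg

variable {n : ℕ} {A : Type*} [CommRing A] [Algebra ℝ A] (D : DiffPolyAlg n A)

lemma pd_zero' (v : Fin n × ℕ) : D.pd v (0 : A) = 0 := by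
  simpa using D.pd_smul v 0 0

lemma Dx_zero' : D.Dx (0 : A) = 0 := by
  simpa using D.Dx_smul 0 0

lemma pd_sumF {ι : Type*} (s : Finset ι) (g : ι → A) (v : Fin n × ℕ) :
    D.pd v (∑ i ∈ s, g i) = ∑ i ∈ s, D.pd v (g i) := by
  classical
  induction s using Finset.cons_induction with
  | empty => simpa using D.pd_zero' v
  | cons i s hi ih => rw [Finset.sum_cons, Finset.sum_cons, D.pd_add, ih]

lemma Dx_sumF {ι : Type*} (s : Finset ι) (g : ι → A) :
    D.Dx (∑ i ∈ s, g i) = ∑ i ∈ s, D.Dx (g i) := by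
  classical
  induction s using Finset.cons_induction with
  | empty => simpa using D.Dx_zero'
  | cons i s hi ih => rw [Finset.sum_cons, Finset.sum_cons, D.Dx_add, ih]

/-- The derivation with coefficients `c`. -/
def gd (c : Fin n × ℕ → A) (f : A) : A := ∑ v ∈ D.supp f, c v * D.pd v f

lemma gd_spec (c : Fin n × ℕ → A) (f : A) {S : Finset (Fin n × ℕ)}
    (hS : D.supp f ⊆ S) : D.gd c f = ∑ v ∈ S, c v * D.pd v f :=
  Finset.sum_subset hS fun v _ hv => by rw [D.pd_eq_zero f v hv, mul_zero]

lemma gd_zero (c : Fin n × ℕ → A) : D.gd c (0 : A) = 0 :=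
  Finset.sum_eq_zero fun v _ => by rw [D.pd_zero', mul_zero]

lemma gd_add (c : Fin n × ℕ → A) (f g : A) :
    D.gd c (f + g) = D.gd c f + D.gd c g := by
  classical
  set S := D.supp f ∪ D.supp g ∪ D.supp (f + g) with hS
  rw [D.gd_spec c (f + g) (S := S) Finset.subset_union_right,
      D.gd_spec c f (S := S) (Finset.subset_union_left.trans Finset.subset_union_left),
      D.gd_spec c g (S := S) (Finset.subset_union_right.trans Finset.subset_union_left),
      ← Finset.sum_add_distrib]
  exact Finset.sum_congr rfl fun v _ => by rw [D.pd_add, mul_add]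

lemma gd_smul (c : Fin n × ℕ → A) (r : ℝ) (f : A) :
    D.gd c (r • f) = r • D.gd c f := by
  classical
  set S := D.supp f ∪ D.supp (r • f) with hS
  rw [D.gd_spec c (r • f) (S := S) Finset.subset_union_right,
      D.gd_spec c f (S := S) Finset.subset_union_left, Finset.smul_sum]
  exact Finset.sum_congr rfl fun v _ => by rw [D.pd_smul, mul_smul_comm]

lemma gd_neg (c : Fin n × ℕ → A) (f : A) : D.gd c (-f) = -D.gd c f := by
  simpa using D.gd_smul c (-1) f

lemma gd_sub (c : Fin n × ℕ → A) (f g : A) :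
    D.gd c (f - g) = D.gd c f - D.gd c g := by
  rw [sub_eq_add_neg, D.gd_add, D.gd_neg, sub_eq_add_neg]

lemma gd_mul (c : Fin n × ℕ → A) (f g : A) :
    D.gd c (f * g) = D.gd c f * g + f * D.gd c g := by
  classical
  set S := D.supp f ∪ D.supp g ∪ D.supp (f * g) with hS
  rw [D.gd_spec c (f * g) (S := S) Finset.subset_union_right,
      D.gd_spec c f (S := S) (Finset.subset_union_left.trans Finset.subset_union_left),
      D.gd_spec c g (S := S) (Finset.subset_union_right.trans Finset.subset_union_left),
      Finset.sum_mul, Finset.mul_sum, ← Finset.sum_add_distrib]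
  exact Finset.sum_congr rfl fun v _ => by rw [D.pd_mul]; ring

lemma gd_sumF (c : Fin n × ℕ → A) {ι : Type*} (s : Finset ι) (g : ι → A) :
    D.gd c (∑ i ∈ s, g i) = ∑ i ∈ s, D.gd c (g i) := by
  classical
  induction s using Finset.cons_induction with
  | empty => simpa using D.gd_zero c
  | cons i s hi ih => rw [Finset.sum_cons, Finset.sum_cons, D.gd_add, ih]

lemma gd_congr (c c' : Fin n × ℕ → A) (f : A) (h : ∀ v, c v = c' v) :
    D.gd c f = D.gd c' f :=
  Finset.sum_congr rfl fun v _ => by rw [h v]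

lemma gd_zero_fun (f : A) : D.gd (fun _ => (0 : A)) f = 0 :=
  Finset.sum_eq_zero fun v _ => zero_mul _

lemma gd_u (c : Fin n × ℕ → A) (z : Fin n × ℕ) : D.gd c (D.u z) = c z := by
  classical
  rw [D.gd_spec c (D.u z) (S := insert z (D.supp (D.u z))) (Finset.subset_insert _ _)]
  rw [Finset.sum_eq_single_of_mem z (Finset.mem_insert_self _ _)
      (fun v _ hvz => by rw [D.pd_u, if_neg hvz, mul_zero])]
  rw [D.pd_u, if_pos rfl, mul_one]

lemma Dx_gd (f : A) : D.Dx f = D.gd (fun v => D.u (v.1, v.2 + 1)) f :=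
  D.Dx_spec f (D.supp f) (Finset.Subset.refl _)

/-- Commutator of two generalized derivations. -/
lemma gd_comm (a b : Fin n × ℕ → A) (f : A) :
    D.gd a (D.gd b f) - D.gd b (D.gd a f)
      = D.gd (fun v => D.gd a (b v) - D.gd b (a v)) f := by
  classical
  set T := D.supp f ∪ (D.supp f).biUnion (fun w => D.supp (D.pd w f)) with hT
  have hfT : D.supp f ⊆ T := Finset.subset_union_left
  have hsub : ∀ w ∈ T, (D.pd w f = 0) ∨ D.supp (D.pd w f) ⊆ T := by
    intro w _
    by_cases hws : w ∈ D.supp f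
    · exact Or.inr fun v hv =>
        Finset.mem_union_right _ (Finset.mem_biUnion.2 ⟨w, hws, hv⟩)
    · exact Or.inl (D.pd_eq_zero f w hws)
  have key : ∀ a b : Fin n × ℕ → A, D.gd a (D.gd b f)
      = (∑ w ∈ T, D.gd a (b w) * D.pd w f)
        + ∑ w ∈ T, ∑ v ∈ T, b w * a v * D.pd v (D.pd w f) := by
    intro a b
    rw [D.gd_spec b f hfT, D.gd_sumF, ← Finset.sum_add_distrib]
    refine Finset.sum_congr rfl fun w hw => ?_
    rw [D.gd_mul]
    congr 1
    rcases hsub w hw with h0 | hsupp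
    · rw [h0, D.gd_zero, mul_zero]
      exact (Finset.sum_eq_zero fun v _ => by rw [D.pd_zero', mul_zero]).symm
    · rw [D.gd_spec a (D.pd w f) hsupp, Finset.mul_sum]
      exact Finset.sum_congr rfl fun v _ => by ring
  have hswap : ∑ w ∈ T, ∑ v ∈ T, a w * b v * D.pd v (D.pd w f)
      = ∑ w ∈ T, ∑ v ∈ T, b w * a v * D.pd v (D.pd w f) := by
    rw [Finset.sum_comm]
    exact Finset.sum_congr rfl fun w _ => Finset.sum_congr rfl fun v _ => by
      rw [D.pd_comm]; ring
  have hdist : ∑ w ∈ T, (D.gd a (b w) - D.gd b (a w)) * D.pd w f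
      = (∑ w ∈ T, D.gd a (b w) * D.pd w f) - ∑ w ∈ T, D.gd b (a w) * D.pd w f := by
    rw [← Finset.sum_sub_distrib]
    exact Finset.sum_congr rfl fun w _ => sub_mul _ _ _
  rw [key a b, key b a, hswap, D.gd_spec _ f hfT, hdist]
  ring

lemma Dx_gd_comm (c : Fin n × ℕ → A) (hc : ∀ v, D.Dx (c v) = c (v.1, v.2 + 1))
    (f : A) : D.Dx (D.gd c f) = D.gd c (D.Dx f) := by
  have h := D.gd_comm (fun v => D.u (v.1, v.2 + 1)) c f
  rw [← D.Dx_gd (D.gd c f), ← D.Dx_gd f] at h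
  have h2 : D.gd (fun v => D.gd (fun w => D.u (w.1, w.2 + 1)) (c v)
      - D.gd c (D.u (v.1, v.2 + 1))) f = 0 := by
    rw [D.gd_congr _ (fun _ => (0 : A)) f
        (fun v => by rw [← D.Dx_gd (c v), hc v, D.gd_u, sub_self]),
      D.gd_zero_fun]
  rw [h2] at h
  exact sub_eq_zero.mp h

lemma Dx_iter_gd_comm (c : Fin n × ℕ → A)
    (hc : ∀ v, D.Dx (c v) = c (v.1, v.2 + 1)) (m : ℕ) (f : A) :
    D.Dx^[m] (D.gd c f) = D.gd c (D.Dx^[m] f) := by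
  induction m with
  | zero => rfl
  | succ m ih =>
      rw [Function.iterate_succ_apply', Function.iterate_succ_apply', ih,
        D.Dx_gd_comm c hc]

lemma Dx_iter_add (m : ℕ) (f g : A) :
    D.Dx^[m] (f + g) = D.Dx^[m] f + D.Dx^[m] g := by
  induction m with
  | zero => rfl
  | succ m ih =>
      rw [Function.iterate_succ_apply', Function.iterate_succ_apply',
        Function.iterate_succ_apply', ih, D.Dx_add]

lemma Dx_iter_smul (m : ℕ) (r : ℝ) (f : A) :
    D.Dx^[m] (r • f) = r • D.Dx^[m] f := by
  induction m with
  | zero => rfl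
  | succ m ih =>
      rw [Function.iterate_succ_apply', Function.iterate_succ_apply', ih, D.Dx_smul]

lemma Dx_iter_sub (m : ℕ) (f g : A) :
    D.Dx^[m] (f - g) = D.Dx^[m] f - D.Dx^[m] g := by
  have := D.Dx_iter_smul m (-1) g
  rw [sub_eq_add_neg, sub_eq_add_neg, D.Dx_iter_add]
  congr 1
  simpa using this

/-- Coefficients of the half-bracket derivation. -/
def cmap (η : Fin n → Fin n → ℝ) (β : Fin n → A) : Fin n × ℕ → A :=
  fun v => ∑ l, η v.1 l • D.Dx^[v.2 + 1] (β l)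

lemma Dx_cmap (η : Fin n → Fin n → ℝ) (β : Fin n → A) (v : Fin n × ℕ) :
    D.Dx (D.cmap η β v) = D.cmap η β (v.1, v.2 + 1) := by
  simp only [cmap]
  rw [D.Dx_sumF]
  refine Finset.sum_congr rfl fun l _ => ?_
  rw [D.Dx_smul]
  exact congrArg (fun x => η v.1 l • x)
    (Function.iterate_succ_apply' D.Dx (v.2 + 1) (β l)).symm

lemma pbracket_eq (η : Fin n → Fin n → ℝ) (α β : Fin n → A) (i : Fin n) :
    D.pbracket η α β i = D.gd (D.cmap η β) (α i) - D.gd (D.cmap η α) (β i) := by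
  have key : ∀ (f : A) (δ : Fin n → A),
      (∑ v ∈ D.supp f, ∑ l, η v.1 l • (D.Dx^[v.2 + 1] (δ l) * D.pd v f))
        = D.gd (D.cmap η δ) f := by
    intro f δ
    refine Finset.sum_congr rfl fun v _ => ?_
    simp only [cmap]
    rw [Finset.sum_mul]
    exact Finset.sum_congr rfl fun l _ => (smul_mul_assoc _ _ _).symm
  simp only [pbracket, gd]
  rw [key (α i) β, key (β i) α]
  rfl

lemma cmap_bracket (η : Fin n → Fin n → ℝ) (β γ : Fin n → A) (v : Fin n × ℕ) :
    D.cmap η (D.pbracket η β γ) v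
      = D.gd (D.cmap η γ) (D.cmap η β v) - D.gd (D.cmap η β) (D.cmap η γ v) := by
  have hβ : ∀ l, D.Dx^[v.2 + 1] (D.pbracket η β γ l)
      = D.gd (D.cmap η γ) (D.Dx^[v.2 + 1] (β l))
        - D.gd (D.cmap η β) (D.Dx^[v.2 + 1] (γ l)) := by
    intro l
    rw [D.pbracket_eq η β γ l, D.Dx_iter_sub,
      D.Dx_iter_gd_comm _ (D.Dx_cmap η γ), D.Dx_iter_gd_comm _ (D.Dx_cmap η β)]
  show (∑ l, η v.1 l • D.Dx^[v.2 + 1] (D.pbracket η β γ l)) = _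
  have h1 : D.gd (D.cmap η γ) (D.cmap η β v)
      = ∑ l, η v.1 l • D.gd (D.cmap η γ) (D.Dx^[v.2 + 1] (β l)) := by
    show D.gd (D.cmap η γ) (∑ l, η v.1 l • D.Dx^[v.2 + 1] (β l)) = _
    rw [D.gd_sumF]
    exact Finset.sum_congr rfl fun l _ => D.gd_smul _ _ _
  have h2 : D.gd (D.cmap η β) (D.cmap η γ v)
      = ∑ l, η v.1 l • D.gd (D.cmap η β) (D.Dx^[v.2 + 1] (γ l)) := by
    show D.gd (D.cmap η β) (∑ l, η v.1 l • D.Dx^[v.2 + 1] (γ l)) = _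
    rw [D.gd_sumF]
    exact Finset.sum_congr rfl fun l _ => D.gd_smul _ _ _
  rw [h1, h2, ← Finset.sum_sub_distrib]
  exact Finset.sum_congr rfl fun l _ => by rw [hβ l, smul_sub]

lemma T_bracket (η : Fin n → Fin n → ℝ) (β γ : Fin n → A) (f : A) :
    D.gd (D.cmap η (D.pbracket η β γ)) f
      = D.gd (D.cmap η γ) (D.gd (D.cmap η β) f)
        - D.gd (D.cmap η β) (D.gd (D.cmap η γ) f) := by
  rw [D.gd_comm (D.cmap η γ) (D.cmap η β) f]
  exact D.gd_congr _ _ f fun v => D.cmap_bracket η β γ v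

lemma cmap_linear (η : Fin n → Fin n → ℝ) (r : ℝ) (α α' : Fin n → A)
    (v : Fin n × ℕ) :
    D.cmap η (fun k => r • α k + α' k) v = r • D.cmap η α v + D.cmap η α' v := by
  simp only [cmap]
  rw [Finset.smul_sum, ← Finset.sum_add_distrib]
  refine Finset.sum_congr rfl fun l _ => ?_
  rw [D.Dx_iter_add, D.Dx_iter_smul, smul_add, smul_comm (η v.1 l) r]

lemma gd_cmap_linear (η : Fin n → Fin n → ℝ) (r : ℝ) (α α' : Fin n → A) (f : A) :
    D.gd (D.cmap η (fun k => r • α k + α' k)) f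
      = r • D.gd (D.cmap η α) f + D.gd (D.cmap η α') f := by
  rw [D.gd_congr _ (fun v => r • D.cmap η α v + D.cmap η α' v) f
      (D.cmap_linear η r α α')]
  simp only [gd]
  rw [Finset.smul_sum, ← Finset.sum_add_distrib]
  exact Finset.sum_congr rfl fun v _ => by rw [add_mul, smul_mul_assoc]

end DiffPolyAlg


/-- The Poisson bracket on 1-forms equips the real vector
space `𝒜ⁿ` of reduced 1-forms with a Lie algebra structure: the bracket is
`ℝ`-bilinear, antisymmetric (`{α,β} = −{β,α}`), and satisfies the Jacobi
identity. -/
theorem pbracket_lie_algebra {n : ℕ} (hn : 1 ≤ n) {A : Type*} [CommRing A]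
    [Algebra ℝ A] (D : DiffPolyAlg n A)
    (η : Fin n → Fin n → ℝ) (hη_symm : ∀ k l, η k l = η l k)
    (η' : Fin n → Fin n → ℝ)
    (hη_nondeg : ∀ i j, ∑ k, η i k * η' k j = if i = j then (1 : ℝ) else 0) :
    -- `ℝ`-linearity in the first argument
    (∀ (r : ℝ) (α α' β : Fin n → A) (i : Fin n),
        D.pbracket η (fun k => r • α k + α' k) β i =
          r • D.pbracket η α β i + D.pbracket η α' β i) ∧
    -- `ℝ`-linearity in the second argument
    (∀ (r : ℝ) (α β β' : Fin n → A) (i : Fin n),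
        D.pbracket η α (fun k => r • β k + β' k) i =
          r • D.pbracket η α β i + D.pbracket η α β' i) ∧
    -- antisymmetry
    (∀ (α β : Fin n → A) (i : Fin n),
        D.pbracket η α β i = -D.pbracket η β α i) ∧
    -- Jacobi identity
    (∀ (α β γ : Fin n → A) (i : Fin n),
        D.pbracket η α (D.pbracket η β γ) i
          + D.pbracket η β (D.pbracket η γ α) i
          + D.pbracket η γ (D.pbracket η α β) i = 0) := by
  refine ⟨?_, ?_, ?_, ?_⟩
  · intro r α α' β i
    simp only [D.pbracket_eq η]
    rw [D.gd_add, D.gd_smul, D.gd_cmap_linear]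
    module
  · intro r α β β' i
    simp only [D.pbracket_eq η]
    rw [D.gd_add, D.gd_smul, D.gd_cmap_linear]
    module
  · intro α β i
    rw [D.pbracket_eq, D.pbracket_eq, neg_sub]
  · intro α β γ i
    simp only [D.pbracket_eq η]
    rw [D.T_bracket η β γ (α i), D.T_bracket η γ α (β i), D.T_bracket η α β (γ i),
      D.gd_sub, D.gd_sub, D.gd_sub]
    ring
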